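/- Under independent Uniform[0,1] inputs, the nonnormalized Sobol' index of any nonempty A ⊆ C for the multilinear model equals Var[(F_ML)_A] = (1/12^{|A|}) (I^B(A))², where I^B is the Banzhaf interaction index of the capacity. -/

import Mathlib

open Finset MeasureTheory

/-- The multilinear model of a capacity. -/
def FML {m : ℕ} (μ : Finset (Fin m) → ℝ) (v : Fin m → ℝ) : ℝ :=
  ∑ A : Finset (Fin m), μ A * (∏ j ∈ A, v j) * (∏ j ∈ Aᶜ, (1 - v j))

/-- A capacity: normalized monotone set function. -/
def IsCapacity {m : ℕ} (μ : Finset (Fin m) → ℝ) : Prop :=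
  μ ∅ = 0 ∧ μ univ = 1 ∧ ∀ A B : Finset (Fin m), A ⊆ B → μ A ≤ μ B

/-- The Banzhaf interaction index of a set function. -/
noncomputable def IB {m : ℕ} (μ : Finset (Fin m) → ℝ) (A : Finset (Fin m)) : ℝ :=
  (1 / 2 ^ (m - A.card)) *
    ∑ D ∈ Aᶜ.powerset, ∑ D' ∈ A.powerset, (-1 : ℝ) ^ (A.card - D'.card) * μ (D' ∪ D)

/-- The joint law of `m` independent Uniform[0,1] random variables. -/
noncomputable def unifPi (m : ℕ) : Measure (Fin m → ℝ) :=
  Measure.pi fun _ => volume.restrict (Set.Icc (0 : ℝ) 1)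

/-- Conditional expectation of `f` given the coordinates in `D` (for independent
Uniform[0,1] inputs): integrate out the remaining coordinates. -/
noncomputable def condE {m : ℕ} (D : Finset (Fin m)) (f : (Fin m → ℝ) → ℝ)
    (v : Fin m → ℝ) : ℝ :=
  ∫ w, f (fun j => if j ∈ D then v j else w j) ∂(unifPi m)

/-- The HDMR component of `f` associated with the subset `A`. -/
noncomputable def hdmr {m : ℕ} (A : Finset (Fin m)) (f : (Fin m → ℝ) → ℝ)
    (v : Fin m → ℝ) : ℝ :=
  ∑ D ∈ A.powerset, (-1 : ℝ) ^ (A \ D).card * condE D f v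

/-- Variance with respect to the uniform product law. -/
noncomputable def varUnif {m : ℕ} (g : (Fin m → ℝ) → ℝ) : ℝ :=
  ∫ v, (g v - ∫ w, g w ∂(unifPi m)) ^ 2 ∂(unifPi m)

/-!
The multilinear model is a combination of separable functions `u ↦ ∏ j, g j (u j)`, and the HDMR
component is linear in the model. For a separable function, `condE D` replaces the factors outside
`D` by their means, so the alternating sum defining `hdmr A` factors as
`∏ j ∈ A, (g j - E g j) * ∏ j ∉ A, E g j`. For the factors `x` and `1 - x` of the multilinear model
this is `±(1/2) ^ (m - |A|) * ∏ j ∈ A, (v j - 1/2)`, with the sign `(-1) ^ |A \ B|` of the Banzhaf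
index, so `hdmr A (FML μ) v = IB μ A * ∏ j ∈ A, (v j - 1/2)`. This centred product has mean zero
and second moment `(1/12) ^ |A|`.
-/

namespace Finset

variable {ι R : Type*} [DecidableEq ι] [CommRing R]

theorem prod_sub_eq_sum_powerset_neg_one_pow (A : Finset ι) (a c : ι → R) :
    ∏ j ∈ A, (a j - c j) =
      ∑ D ∈ A.powerset, (-1) ^ #(A \ D) * ∏ j ∈ A, (if j ∈ D then a j else c j) := by
  simp_rw [sub_eq_add_neg, prod_add, prod_neg]
  refine sum_congr rfl fun D hD => ?_
  rw [prod_ite, filter_mem_eq_inter, inter_eq_right.mpr (mem_powerset.mp hD),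
    filter_not, filter_mem_eq_inter, inter_eq_right.mpr (mem_powerset.mp hD)]
  ring

theorem sum_powerset_compl_powerset_union [Fintype ι] {M : Type*} [AddCommMonoid M]
    (A : Finset ι) (f : Finset ι → M) :
    ∑ D ∈ Aᶜ.powerset, ∑ D' ∈ A.powerset, f (D' ∪ D) = ∑ B, f B := by
  rw [← sum_product']
  refine sum_nbij' (fun p => p.2 ∪ p.1) (fun B => (B \ A, B ∩ A)) ?_ ?_ ?_ ?_ ?_
  · simp
  · simp [Finset.subset_iff]
  · rintro ⟨D, D'⟩ h
    simp only [mem_product, mem_powerset, Finset.subset_iff, mem_compl] at h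
    ext x <;> simp only [mem_sdiff, mem_inter, mem_union] <;> grind
  · intro B _
    exact (union_comm _ _).trans (sdiff_union_inter B A)
  · intros; rfl

end Finset

theorem integral_Icc_zero_one_eq_intervalIntegral (f : ℝ → ℝ) :
    ∫ x in Set.Icc (0 : ℝ) 1, f x = ∫ x in (0 : ℝ)..1, f x := by
  rw [intervalIntegral.integral_of_le zero_le_one, integral_Icc_eq_integral_Ioc]

theorem integral_Icc_zero_one_id : ∫ x in Set.Icc (0 : ℝ) 1, x = 1 / 2 := by
  rw [integral_Icc_zero_one_eq_intervalIntegral]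
  norm_num

theorem integral_Icc_zero_one_one_sub : ∫ x in Set.Icc (0 : ℝ) 1, (1 - x) = 1 / 2 := by
  rw [integral_Icc_zero_one_eq_intervalIntegral,
    intervalIntegral.integral_comp_sub_left (fun x => x)]
  norm_num

theorem integral_Icc_zero_one_sub_half : ∫ x in Set.Icc (0 : ℝ) 1, (x - 1 / 2) = 0 := by
  rw [integral_Icc_zero_one_eq_intervalIntegral]
  norm_num [intervalIntegral.integral_sub]

theorem integral_Icc_zero_one_sub_half_sq :
    ∫ x in Set.Icc (0 : ℝ) 1, (x - 1 / 2) ^ 2 = 1 / 12 := by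
  rw [integral_Icc_zero_one_eq_intervalIntegral,
    intervalIntegral.integral_comp_sub_right (· ^ 2)]
  norm_num

section UniformInputs

variable {m : ℕ}

theorem integral_unifPi_prod_mem (A : Finset (Fin m)) (f : ℝ → ℝ) :
    ∫ v, ∏ j ∈ A, f (v j) ∂(unifPi m) = (∫ x in Set.Icc (0 : ℝ) 1, f x) ^ #A := by
  have := integral_fintype_prod_eq_prod (fun j x => if j ∈ A then f x else 1)
    (μ := fun _ => volume.restrict (Set.Icc (0 : ℝ) 1))
  simp only [Fintype.prod_ite_mem] at this
  rw [unifPi, this, ← prod_const, ← Fintype.prod_ite_mem A]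
  refine prod_congr rfl fun j _ => ?_
  split_ifs <;> simp

theorem condE_prod (D : Finset (Fin m)) (g : Fin m → ℝ → ℝ) (v : Fin m → ℝ) :
    condE D (fun u => ∏ j, g j (u j)) v =
      ∏ j, if j ∈ D then g j (v j) else ∫ x in Set.Icc (0 : ℝ) 1, g j x := by
  have := integral_fintype_prod_eq_prod (fun j x => if j ∈ D then g j (v j) else g j x)
    (μ := fun _ => volume.restrict (Set.Icc (0 : ℝ) 1))
  simp only [condE, unifPi, apply_ite (g _)]
  rw [this]
  refine prod_congr rfl fun j _ => ?_
  split_ifs <;> simp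

theorem condE_sum_prod (D : Finset (Fin m)) {κ : Type*} (s : Finset κ) (c : κ → ℝ)
    (g : κ → Fin m → ℝ → ℝ) (hg : ∀ k j, IntegrableOn (g k j) (Set.Icc 0 1))
    (v : Fin m → ℝ) :
    condE D (fun u => ∑ k ∈ s, c k * ∏ j, g k j (u j)) v =
      ∑ k ∈ s, c k * condE D (fun u => ∏ j, g k j (u j)) v := by
  have hint (k : κ) : Integrable (fun w : Fin m → ℝ =>
      ∏ j, (fun x => g k j (if j ∈ D then v j else x)) (w j)) (unifPi m) := by
    refine Integrable.fintype_prod (f := fun j x => g k j (if j ∈ D then v j else x))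
      (μ := fun _ => volume.restrict (Set.Icc (0 : ℝ) 1)) fun j => ?_
    by_cases hj : j ∈ D
    · simp [hj]
    · simp only [hj, if_false]
      exact hg k j
  simp only [condE]
  rw [integral_finsetSum _ fun k _ => (hint k).const_mul _]
  simp only [integral_const_mul]

theorem hdmr_prod (A : Finset (Fin m)) (g : Fin m → ℝ → ℝ) (v : Fin m → ℝ) :
    hdmr A (fun u => ∏ j, g j (u j)) v =
      (∏ j ∈ A, (g j (v j) - ∫ x in Set.Icc (0 : ℝ) 1, g j x)) *
        ∏ j ∈ Aᶜ, ∫ x in Set.Icc (0 : ℝ) 1, g j x := by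
  simp only [hdmr, condE_prod]
  rw [prod_sub_eq_sum_powerset_neg_one_pow, sum_mul]
  refine sum_congr rfl fun D hD => ?_
  rw [← prod_mul_prod_compl A, mul_assoc]
  congr 2
  refine prod_congr rfl fun j hj => if_neg fun hjD => ?_
  exact mem_compl.mp hj (mem_powerset.mp hD hjD)

theorem hdmr_sum_prod (A : Finset (Fin m)) {κ : Type*} (s : Finset κ) (c : κ → ℝ)
    (g : κ → Fin m → ℝ → ℝ) (hg : ∀ k j, IntegrableOn (g k j) (Set.Icc 0 1))
    (v : Fin m → ℝ) :
    hdmr A (fun u => ∑ k ∈ s, c k * ∏ j, g k j (u j)) v =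
      ∑ k ∈ s, c k * hdmr A (fun u => ∏ j, g k j (u j)) v := by
  simp only [hdmr, condE_sum_prod _ s c g hg, mul_sum]
  rw [sum_comm]
  simp only [mul_left_comm]

theorem FML_eq_sum_prod (μ : Finset (Fin m) → ℝ) :
    FML μ = fun u => ∑ B, μ B * ∏ j, (fun x => if j ∈ B then x else 1 - x) (u j) := by
  funext u
  refine sum_congr rfl fun B _ => ?_
  rw [mul_assoc, prod_ite, filter_mem_eq_inter, univ_inter, filter_not, filter_mem_eq_inter,
    univ_inter, ← compl_eq_univ_sdiff]

theorem IB_eq_sum (μ : Finset (Fin m) → ℝ) (A : Finset (Fin m)) :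
    IB μ A = (1 / 2) ^ (m - #A) * ∑ B, (-1) ^ #(A \ B) * μ B := by
  rw [IB, one_div_pow, ← sum_powerset_compl_powerset_union]
  congr 1
  refine sum_congr rfl fun D hD => sum_congr rfl fun D' hD' => ?_
  have hAD : Disjoint A D := by simpa [subset_compl_iff_disjoint_left, disjoint_comm] using hD
  rw [sdiff_union_distrib, sdiff_eq_self_of_disjoint hAD, inter_eq_left.mpr sdiff_subset,
    card_sdiff_of_subset (mem_powerset.mp hD')]

theorem prod_ite_one_sub_sub_half {ι : Type*} [DecidableEq ι] (A B : Finset ι) (v : ι → ℝ) :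
    ∏ j ∈ A, ((if j ∈ B then v j else 1 - v j) - 1 / 2) =
      (-1) ^ #(A \ B) * ∏ j ∈ A, (v j - 1 / 2) := by
  have (j : ι) : (if j ∈ B then v j else 1 - v j) - 1 / 2 =
      (if j ∈ B then 1 else -1) * (v j - 1 / 2) := by
    split_ifs <;> ring
  simp only [this, prod_mul_distrib, prod_ite, prod_const_one, one_mul, prod_const, filter_not,
    filter_mem_eq_inter, sdiff_inter_self_left]

theorem hdmr_FML (μ : Finset (Fin m) → ℝ) (A : Finset (Fin m)) (v : Fin m → ℝ) :
    hdmr A (FML μ) v = IB μ A * ∏ j ∈ A, (v j - 1 / 2) := by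
  have hmean (B : Finset (Fin m)) (j : Fin m) :
      ∫ x in Set.Icc (0 : ℝ) 1, (if j ∈ B then x else 1 - x) = 1 / 2 := by
    split_ifs
    exacts [integral_Icc_zero_one_id, integral_Icc_zero_one_one_sub]
  have hint (B : Finset (Fin m)) (j : Fin m) :
      IntegrableOn (fun x : ℝ => if j ∈ B then x else 1 - x) (Set.Icc 0 1) := by
    split_ifs <;> exact Continuous.integrableOn_Icc (by fun_prop)
  rw [FML_eq_sum_prod, hdmr_sum_prod A univ μ _ hint, IB_eq_sum, mul_sum, sum_mul]
  refine sum_congr rfl fun B _ => ?_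
  rw [hdmr_prod A (fun j x => if j ∈ B then x else 1 - x)]
  simp only [hmean, prod_ite_one_sub_sub_half, prod_const, card_compl, Fintype.card_fin]
  ring

theorem varUnif_const_mul_prod_sub_half (A : Finset (Fin m)) (hA : A.Nonempty) (c : ℝ) :
    varUnif (fun v => c * ∏ j ∈ A, (v j - 1 / 2)) = 1 / 12 ^ #A * c ^ 2 := by
  have hmean : ∫ w, c * ∏ j ∈ A, (w j - 1 / 2) ∂(unifPi m) = 0 := by
    rw [integral_const_mul, integral_unifPi_prod_mem A (fun x => x - 1 / 2),
      integral_Icc_zero_one_sub_half, zero_pow hA.card_pos.ne', mul_zero]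
  simp only [varUnif, hmean, sub_zero, mul_pow, ← prod_pow]
  rw [integral_const_mul, integral_unifPi_prod_mem A (fun x => (x - 1 / 2) ^ 2),
    integral_Icc_zero_one_sub_half_sq, one_div_pow]
  ring

end UniformInputs

theorem sobol_multilinear_banzhaf_general {m : ℕ} (μ : Finset (Fin m) → ℝ)
    (A : Finset (Fin m)) (hA : A.Nonempty) :
    varUnif (hdmr A (FML μ)) =
      (1 / 12 ^ A.card) * (IB μ A) ^ 2 := by
  have hcomponent : hdmr A (FML μ) = fun v => IB μ A * ∏ j ∈ A, (v j - 1 / 2) :=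
    funext (hdmr_FML μ A)
  rw [hcomponent, varUnif_const_mul_prod_sub_half A hA]

/-- The nonnormalized Sobol' index of a nonempty subset `A` for the multilinear model
equals `(1/12^|A|) (I^B(A))²` where `I^B` is the Banzhaf interaction index. -/
theorem sobol_multilinear_banzhaf {m : ℕ} (μ : Finset (Fin m) → ℝ)
    (hμ : IsCapacity μ) (A : Finset (Fin m)) (hA : A.Nonempty) :
    varUnif (hdmr A (FML μ)) =
      (1 / 12 ^ A.card) * (IB μ A) ^ 2 :=
  sobol_multilinear_banzhaf_general μ A hA
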